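/- arXiv:1508.04419 — 3 statements merged into one kernel-verified Lean document; each statement's English description precedes it below -/
import Mathlib

section
/- Let α > 0 and k > 0. If E_α(-2 k^α t^α) = E_α(-k^α t^α) · E_α(-k^α t^α) for all t ≥ 0, then Γ(2α + 1) = 2 · Γ(α + 1)², i.e. Γ(2α+1) / (4 Γ(α+1) Γ(α+1)) = 1/2. -/
/-- The Mittag-Leffler function `E_α(z) = ∑_{k=0}^∞ z^k / Γ(αk + 1)`. -/
noncomputable def mittagLeffler (α z : ℝ) : ℝ :=
  ∑' k : ℕ, z ^ k / Real.Gamma (α * k + 1)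

/-!
By log-convexity of `Γ`, the ratio `Γ(αn + 1) / Γ(αn + α + 1)` tends to `0`, so `E_α` is the sum
of a power series with infinite radius and `E_α(x) = 1 + a x + b x² + o(x²)` at `0`, with
`a = 1 / Γ(α + 1)` and `b = 1 / Γ(2α + 1)`. Writing `x = -kᵅtᵅ`, the hypothesis says
`E_α(2x) = E_α(x)²` for `x ≤ 0`; comparing the coefficients of `x²` gives `4b = a² + 2b`.
-/

open Real Filter Topology Asymptotics

theorem Real.rpow_mul_Gamma_add_one_le {a b : ℝ} (ha : 0 < a) (hb : 0 < b) :
    b ^ a * Gamma (b + 1) ≤ Gamma (b + 1 + a) := by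
  have hslope := convexOn_log_Gamma.slope_mono_adjacent (Set.mem_Ioi.2 hb)
    (Set.mem_Ioi.2 (by positivity : 0 < b + 1 + a)) (by linarith : b < b + 1)
    (by linarith : b + 1 < b + 1 + a)
  have hlog : log (Gamma (b + 1)) - log (Gamma b) = log b := by
    rw [Gamma_add_one hb.ne', log_mul hb.ne' (Gamma_pos_of_pos hb).ne']
    ring
  simp only [Function.comp_apply, hlog, add_sub_cancel_left, div_one,
    le_div_iff₀ ha] at hslope
  rw [← log_le_log_iff (by positivity [Gamma_pos_of_pos hb]) (Gamma_pos_of_pos (by positivity)),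
    log_mul (by positivity) (Gamma_pos_of_pos (by positivity)).ne', log_rpow hb]
  linarith

theorem Real.tendsto_Gamma_div_Gamma_add_atTop {a : ℝ} (ha : 0 < a) :
    Tendsto (fun x => Gamma (x + 1) / Gamma (x + 1 + a)) atTop (𝓝 0) := by
  refine squeeze_zero' ?_ ?_ (tendsto_rpow_neg_atTop ha)
  · filter_upwards [eventually_gt_atTop 0] with x hx
    exact div_nonneg (Gamma_pos_of_pos (by positivity)).le (Gamma_pos_of_pos (by positivity)).le
  · filter_upwards [eventually_gt_atTop 0] with x hx
    rw [div_le_iff₀ (Gamma_pos_of_pos (by positivity)), rpow_neg hx.le, inv_mul_eq_div,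
      le_div_iff₀ (by positivity), mul_comm]
    exact rpow_mul_Gamma_add_one_le ha hx

theorem sq_eq_two_mul_of_apply_two_mul_eq_sq {f : ℝ → ℝ} {a b : ℝ} {l : Filter ℝ} [l.NeBot]
    (hl : l ≤ 𝓝[≠] 0)
    (hf : (fun x => f x - (1 + a * x + b * x ^ 2)) =o[𝓝 0] fun x => x ^ 2)
    (h : ∀ᶠ x in l, f (2 * x) = f x ^ 2) : a ^ 2 = 2 * b := by
  set P : ℝ → ℝ := fun x => 1 + a * x + b * x ^ 2
  set r : ℝ → ℝ := fun x => f x - P x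
  have hr_two_mul : (fun x => r (2 * x)) =o[𝓝 0] fun x => x ^ 2 := by
    refine (hf.comp_tendsto ?_).trans_isBigO ?_
    · simpa using (continuous_const_mul (2 : ℝ)).tendsto 0
    · exact (isBigO_refl (fun x : ℝ => x ^ 2) _).const_mul_left 4 |>.congr_left fun x => by
        simp only [Function.comp_apply]
        ring
  have hbdd : (fun x => 2 * P x + r x) =O[𝓝 0] fun _ => (1 : ℝ) := by
    refine Tendsto.isBigO_one ℝ (c := 2 * P 0 + 0) ?_
    exact ((Continuous.tendsto (by fun_prop) 0).const_mul 2).add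
      (hf.trans_tendsto (by simpa using (continuous_pow 2).tendsto (0 : ℝ)))
  have hhigher : (fun x => 2 * a * b * x ^ 3 + b ^ 2 * x ^ 4) =o[𝓝 0] fun x => x ^ 2 :=
    ((isLittleO_pow_pow (by norm_num)).const_mul_left _).add
      ((isLittleO_pow_pow (by norm_num)).const_mul_left _)
  -- `P x ^ 2 - P (2x) = (a² - 2b) x² + 2ab x³ + b² x⁴`, while `f (2x) = f x ^ 2` turns the left
  -- side into `r (2x) - r x * (2 P x + r x)`.
  have hsmall : (fun x => (a ^ 2 - 2 * b) * x ^ 2) =o[l] fun x => x ^ 2 := by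
    refine ((hr_two_mul.sub ((hf.mul_isBigO hbdd).congr_right fun x => mul_one _)).sub hhigher
      |>.mono (hl.trans nhdsWithin_le_nhds)).congr' ?_ EventuallyEq.rfl
    filter_upwards [h] with x hx
    simp only [r, P] at hx ⊢
    linear_combination hx
  by_contra hne
  refine isLittleO_irrefl' (Eventually.frequently ?_)
    ((isLittleO_const_mul_left_iff (sub_ne_zero.2 hne)).1 hsmall)
  filter_upwards [hl self_mem_nhdsWithin] with x hx
  simpa using hx

noncomputable def mittagLefflerSeries (α : ℝ) : FormalMultilinearSeries ℝ ℝ ℝ :=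
  FormalMultilinearSeries.ofScalars ℝ fun n => (Gamma (α * n + 1))⁻¹

theorem mittagLeffler_eq_sum (α : ℝ) : mittagLeffler α = (mittagLefflerSeries α).sum := by
  ext z
  rw [mittagLefflerSeries, ← FormalMultilinearSeries.ofScalarsSum,
    FormalMultilinearSeries.ofScalars_sum_eq]
  simp only [smul_eq_mul, mittagLeffler, div_eq_inv_mul]

theorem mittagLefflerSeries_radius {α : ℝ} (hα : 0 < α) : (mittagLefflerSeries α).radius = ⊤ := by
  refine FormalMultilinearSeries.ofScalars_radius_eq_top_of_tendsto _ _
    (Eventually.of_forall fun n => inv_ne_zero (Gamma_pos_of_pos (by positivity)).ne') ?_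
  have hlin : Tendsto (fun n : ℕ => α * n) atTop atTop :=
    tendsto_natCast_atTop_atTop.const_mul_atTop hα
  refine ((tendsto_Gamma_div_Gamma_add_atTop hα).comp hlin).congr fun n => ?_
  have hpos : ∀ x : ℝ, 0 ≤ x → 0 < Gamma (x + 1) := fun x hx => Gamma_pos_of_pos (by linarith)
  simp only [Function.comp_apply, norm_inv, Real.norm_eq_abs, Nat.cast_succ,
    abs_of_pos (hpos _ (by positivity : 0 ≤ α * n)),
    abs_of_pos (hpos _ (by positivity : 0 ≤ α * (n + 1)))]
  rw [inv_div_inv, mul_add_one, add_right_comm]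

theorem hasFPowerSeriesAt_mittagLeffler {α : ℝ} (hα : 0 < α) :
    HasFPowerSeriesAt (mittagLeffler α) (mittagLefflerSeries α) 0 := by
  rw [mittagLeffler_eq_sum]
  exact ((mittagLefflerSeries α).hasFPowerSeriesOnBall
    (by simp [mittagLefflerSeries_radius hα])).hasFPowerSeriesAt

theorem mittagLeffler_sub_taylor_isLittleO {α : ℝ} (hα : 0 < α) :
    (fun x => mittagLeffler α x -
      (1 + (Gamma (α + 1))⁻¹ * x + (Gamma (2 * α + 1))⁻¹ * x ^ 2)) =o[𝓝 0] fun x => x ^ 2 := by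
  have h3 := (hasFPowerSeriesAt_mittagLeffler hα).isBigO_sub_partialSum_pow 3
  simp only [zero_add, FormalMultilinearSeries.partialSum, Finset.sum_range_succ,
    Finset.sum_range_zero, mittagLefflerSeries, FormalMultilinearSeries.ofScalars_apply_eq,
    Nat.cast_zero, Nat.cast_one, Nat.cast_ofNat, mul_zero, mul_one, Gamma_one, inv_one, pow_zero,
    pow_one, smul_eq_mul, mul_comm α 2] at h3
  refine h3.trans_isLittleO ?_
  simpa using (isLittleO_pow_pow (𝕜 := ℝ) (by norm_num : 2 < 3)).norm_left

theorem gamma_identity_of_mittagLeffler_sq (α k : ℝ) (hα : 0 < α) (hk : 0 < k)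
    (h : ∀ t : ℝ, 0 ≤ t →
      mittagLeffler α (-2 * k ^ α * t ^ α) =
        mittagLeffler α (-(k ^ α) * t ^ α) * mittagLeffler α (-(k ^ α) * t ^ α)) :
    Real.Gamma (2 * α + 1) = 2 * Real.Gamma (α + 1) ^ 2 ∧
      Real.Gamma (2 * α + 1) / (4 * Real.Gamma (α + 1) * Real.Gamma (α + 1)) = 1 / 2 := by
  have hsq : ∀ᶠ x in 𝓝[<] 0, mittagLeffler α (2 * x) = mittagLeffler α x ^ 2 := by
    filter_upwards [self_mem_nhdsWithin] with x (hx : x < 0)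
    have hx' : 0 ≤ -x := neg_nonneg.2 hx.le
    set t := (-x) ^ α⁻¹ / k
    have ht : 0 ≤ t := div_nonneg (rpow_nonneg hx' _) hk.le
    have hkt : k ^ α * t ^ α = -x := by
      rw [← mul_rpow hk.le ht, mul_div_cancel₀ _ hk.ne', rpow_inv_rpow hx' hα.ne']
    have := h t ht
    rwa [show -2 * k ^ α * t ^ α = 2 * x by linear_combination -2 * hkt,
      show -(k ^ α) * t ^ α = x by linear_combination -hkt, ← sq] at this
  have hcoeff := sq_eq_two_mul_of_apply_two_mul_eq_sq (nhdsLT_le_nhdsNE 0)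
    (mittagLeffler_sub_taylor_isLittleO hα) hsq
  have hΓ₁ : Gamma (α + 1) ≠ 0 := (Gamma_pos_of_pos (by positivity)).ne'
  have hmain : Gamma (2 * α + 1) = 2 * Gamma (α + 1) ^ 2 := by
    field_simp at hcoeff
    rw [mul_comm 2 α]
    linear_combination hcoeff
  refine ⟨hmain, ?_⟩
  rw [hmain]
  field_simp
  ring
end

section
/- For every α with 0 < α < 1, one has the strict inequality Γ(2α + 1) < 2 · Γ(α + 1)²; consequently, for α in the interval (0, 1], the equality Γ(2α + 1) = 2 · Γ(α + 1)² holds if and only if α = 1. -/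
open intervalIntegral Set

private lemma beta_sq (α : ℝ) (hα : 0 < α) :
    Real.Gamma (α + 1) ^ 2 =
      Real.Gamma (2 * α + 2) * ∫ t in (0:ℝ)..1, t ^ α * (1 - t) ^ α := by
  have hre : 0 < (((α : ℂ) + 1)).re := by simp; linarith
  have key := Complex.Gamma_mul_Gamma_eq_betaIntegral hre hre
  have hbeta : Complex.betaIntegral ((α : ℂ) + 1) ((α : ℂ) + 1)
      = ((∫ t in (0:ℝ)..1, t ^ α * (1 - t) ^ α : ℝ) : ℂ) := by
    rw [Complex.betaIntegral]
    have hcongr : (∫ x in (0:ℝ)..1, (x:ℂ) ^ ((α:ℂ) + 1 - 1) * ((1:ℂ) - x) ^ ((α:ℂ) + 1 - 1))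
        = ∫ x in (0:ℝ)..1, ((x ^ α * (1 - x) ^ α : ℝ) : ℂ) := by
      apply intervalIntegral.integral_congr
      intro x hx
      rw [Set.uIcc_of_le (by norm_num : (0:ℝ) ≤ 1)] at hx
      obtain ⟨hx0, hx1⟩ := hx
      have h1x : (0:ℝ) ≤ 1 - x := by linarith
      simp only
      rw [Complex.ofReal_mul, Complex.ofReal_cpow hx0, Complex.ofReal_cpow h1x]
      push_cast
      ring_nf
    rw [hcongr]
    exact RCLike.intervalIntegral_ofReal
  rw [hbeta] at key
  have hG : ((α : ℂ) + 1) + ((α : ℂ) + 1) = ((2 * α + 2 : ℝ) : ℂ) := by push_cast; ring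
  rw [hG] at key
  have hA : ((α : ℂ) + 1) = ((α + 1 : ℝ) : ℂ) := by push_cast; ring
  rw [hA, Complex.Gamma_ofReal, Complex.Gamma_ofReal] at key
  have : ((Real.Gamma (α + 1) ^ 2 : ℝ) : ℂ)
      = ((Real.Gamma (2 * α + 2) * ∫ t in (0:ℝ)..1, t ^ α * (1 - t) ^ α : ℝ) : ℂ) := by
    push_cast
    rw [sq]
    exact key
  exact_mod_cast this

private lemma main_lt (α : ℝ) (hα : 0 < α) (hα1 : α < 1) :
    Real.Gamma (2 * α + 1) < 2 * Real.Gamma (α + 1) ^ 2 := by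
  set I := ∫ t in (0:ℝ)..1, t ^ α * (1 - t) ^ α with hI_def
  -- pointwise bound
  have hpoint : ∀ t ∈ Icc (0:ℝ) 1,
      (4:ℝ) ^ (1 - α) * (t * (1 - t)) ≤ t ^ α * (1 - t) ^ α := by
    intro t ht
    obtain ⟨ht0, ht1⟩ := ht
    have h1t : (0:ℝ) ≤ 1 - t := by linarith
    rw [← Real.mul_rpow ht0 h1t]
    set x := t * (1 - t) with hx_def
    have hx0 : 0 ≤ x := mul_nonneg ht0 h1t
    have hx14 : x ≤ 1 / 4 := by nlinarith [sq_nonneg (t - 1/2)]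
    rcases eq_or_lt_of_le hx0 with h | h
    · rw [← h, Real.zero_rpow (ne_of_gt hα), mul_zero]
    · have h4 : (4:ℝ) ^ (1 - α) = (1/4 : ℝ) ^ (α - 1) := by
        rw [show (1 - α) = -(α - 1) by ring, Real.rpow_neg (by norm_num : (0:ℝ) ≤ 4),
          ← Real.inv_rpow (by norm_num : (0:ℝ) ≤ 4)]
        norm_num
      have hmono : (1/4 : ℝ) ^ (α - 1) ≤ x ^ (α - 1) :=
        Real.rpow_le_rpow_of_nonpos h hx14 (by linarith)
      have hxsplit : x ^ α = x ^ (α - 1) * x := by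
        conv_lhs => rw [show α = (α - 1) + 1 by ring]
        rw [Real.rpow_add h, Real.rpow_one]
      rw [hxsplit, h4]
      exact mul_le_mul_of_nonneg_right hmono hx0
  -- continuity and integrability
  have hcont : Continuous fun t : ℝ => t ^ α * (1 - t) ^ α := by
    apply Continuous.mul
    · exact continuous_id.rpow_const fun x => Or.inr hα.le
    · exact (continuous_const.sub continuous_id).rpow_const fun x => Or.inr hα.le
  have hcont2 : Continuous fun t : ℝ => (4:ℝ) ^ (1 - α) * (t * (1 - t)) := by
    continuity
  have hmono := intervalIntegral.integral_mono_on (μ := MeasureTheory.volume) (by norm_num : (0:ℝ) ≤ 1)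
    (hcont2.intervalIntegrable 0 1) (hcont.intervalIntegrable 0 1) hpoint
  -- compute the lower integral
  have hcomp : ∫ t in (0:ℝ)..1, (4:ℝ) ^ (1 - α) * (t * (1 - t))
      = (4:ℝ) ^ (1 - α) * (1 / 6) := by
    rw [intervalIntegral.integral_const_mul]
    congr 1
    have heq : (fun t : ℝ => t * (1 - t)) = fun t : ℝ => t - t ^ 2 := by
      funext t; ring
    rw [heq]
    have h1 : (∫ t in (0:ℝ)..1, (t - t ^ 2))
        = (∫ t in (0:ℝ)..1, t) - ∫ t in (0:ℝ)..1, t ^ 2 :=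
      intervalIntegral.integral_sub intervalIntegral.intervalIntegrable_id
        (intervalIntegral.intervalIntegrable_pow 2)
    rw [h1, integral_id, integral_pow]
    norm_num
  -- numeric inequality : 3 < 4 ^ (1 - α) * (2 α + 1)
  have hnum : (3:ℝ) < (4:ℝ) ^ (1 - α) * (2 * α + 1) := by
    have h2α : (0:ℝ) < 2 * α + 1 := by linarith
    have hlog : α * Real.log 3 < Real.log (2 * α + 1) := by
      have hc := strictConcaveOn_log_Ioi.2 (Set.mem_Ioi.mpr one_pos)
        (Set.mem_Ioi.mpr (by norm_num : (0:ℝ) < 3)) (by norm_num : (1:ℝ) ≠ 3)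
        (by linarith : (0:ℝ) < 1 - α) hα (by ring)
      simp only [smul_eq_mul, Real.log_one, mul_zero, zero_add, mul_one] at hc
      calc α * Real.log 3 < Real.log ((1 - α) * 1 + α * 3) := by
            simpa [mul_one] using hc
        _ = Real.log (2 * α + 1) := by ring_nf
    have h3α : (3:ℝ) ^ α < 2 * α + 1 := by
      rw [Real.rpow_def_of_pos (by norm_num : (0:ℝ) < 3)]
      calc Real.exp (Real.log 3 * α) < Real.exp (Real.log (2 * α + 1)) := by
            apply Real.exp_lt_exp.mpr; linarith [hlog]
        _ = 2 * α + 1 := Real.exp_log h2α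
    have h34 : (3:ℝ) ^ (1 - α) ≤ (4:ℝ) ^ (1 - α) :=
      Real.rpow_le_rpow (by norm_num) (by norm_num) (by linarith)
    have hsplit : (3:ℝ) = (3:ℝ) ^ (1 - α) * (3:ℝ) ^ α := by
      rw [← Real.rpow_add (by norm_num : (0:ℝ) < 3)]
      norm_num
    have h3pos : (0:ℝ) < (3:ℝ) ^ α := Real.rpow_pos_of_pos (by norm_num) _
    have h4pos : (0:ℝ) < (4:ℝ) ^ (1 - α) := Real.rpow_pos_of_pos (by norm_num) _
    calc (3:ℝ) = (3:ℝ) ^ (1 - α) * (3:ℝ) ^ α := hsplit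
      _ ≤ (4:ℝ) ^ (1 - α) * (3:ℝ) ^ α := mul_le_mul_of_nonneg_right h34 h3pos.le
      _ < (4:ℝ) ^ (1 - α) * (2 * α + 1) := by
          exact mul_lt_mul_of_pos_left h3α h4pos
  -- hence I > 1 / (2 (2α+1))
  have h2α : (0:ℝ) < 2 * α + 1 := by linarith
  have hIlb : 1 / (2 * (2 * α + 1)) < I := by
    rw [hcomp] at hmono
    have : 1 / (2 * (2 * α + 1)) < (4:ℝ) ^ (1 - α) * (1/6) := by
      rw [div_lt_iff₀ (by positivity)]
      nlinarith [hnum]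
    linarith
  -- combine with Gamma identities
  have hGpos : 0 < Real.Gamma (2 * α + 1) := Real.Gamma_pos_of_pos (by linarith)
  have hrec : Real.Gamma (2 * α + 2) = (2 * α + 1) * Real.Gamma (2 * α + 1) := by
    rw [show 2 * α + 2 = (2 * α + 1) + 1 by ring, Real.Gamma_add_one (ne_of_gt h2α)]
  have hsq := beta_sq α hα
  rw [hrec] at hsq
  have h1 : 1 < 2 * (2 * α + 1) * I := by
    rw [div_lt_iff₀ (by positivity)] at hIlb
    linarith
  calc Real.Gamma (2 * α + 1) = Real.Gamma (2 * α + 1) * 1 := by ring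
    _ < Real.Gamma (2 * α + 1) * (2 * (2 * α + 1) * I) :=
        mul_lt_mul_of_pos_left h1 hGpos
    _ = 2 * ((2 * α + 1) * Real.Gamma (2 * α + 1) * I) := by ring
    _ = 2 * Real.Gamma (α + 1) ^ 2 := by rw [← hsq]

theorem gamma_two_alpha_lt_and_eq_iff :
    (∀ α : ℝ, 0 < α → α < 1 →
      Real.Gamma (2 * α + 1) < 2 * Real.Gamma (α + 1) ^ 2) ∧
    (∀ α : ℝ, 0 < α → α ≤ 1 →
      (Real.Gamma (2 * α + 1) = 2 * Real.Gamma (α + 1) ^ 2 ↔ α = 1)) := by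
  constructor
  · exact main_lt
  · intro α hα hα1
    constructor
    · intro heq
      by_contra hne
      have hlt : α < 1 := lt_of_le_of_ne hα1 hne
      have := main_lt α hα hlt
      linarith
    · intro h1
      subst h1
      have h3 : Real.Gamma 3 = 2 := by
        rw [show (3:ℝ) = ((2:ℕ) : ℝ) + 1 by norm_num, Real.Gamma_nat_eq_factorial]
        norm_num
      have h2 : Real.Gamma 2 = 1 := Real.Gamma_two
      norm_num [h3, h2]
end

section
/- Let 0 < α ≤ 1 and k > 0. The identity E_{α,α}(-2 k^α t^α) = E_{α,α}(-k^α t^α) · E_α(-k^α t^α) holds for all t ≥ 0 if and only if α = 1. -/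
/-- The two-parameter Mittag-Leffler function `E_{α,β}(z) = ∑_{k=0}^∞ z^k / Γ(αk + β)`. -/
noncomputable def mittagLeffler2 (α β z : ℝ) : ℝ :=
  ∑' k : ℕ, z ^ k / Real.Gamma (α * k + β)

open Real FormalMultilinearSeries

theorem Real.Gamma_mul_Gamma_eq_integral {a b : ℝ} (ha : 0 < a) (hb : 0 < b) :
    Gamma a * Gamma b = Gamma (a + b) * ∫ t in (0 : ℝ)..1, t ^ (a - 1) * (1 - t) ^ (b - 1) := by
  have h := Complex.Gamma_mul_Gamma_eq_betaIntegral (s := a) (t := b) (by simpa) (by simpa)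
  have hbeta : Complex.betaIntegral a b
      = ((∫ t in (0 : ℝ)..1, t ^ (a - 1) * (1 - t) ^ (b - 1) : ℝ) : ℂ) := by
    rw [Complex.betaIntegral, ← intervalIntegral.integral_ofReal]
    refine intervalIntegral.integral_congr fun x hx => ?_
    rw [Set.uIcc_of_le zero_le_one] at hx
    push_cast
    rw [Complex.ofReal_cpow hx.1, Complex.ofReal_cpow (sub_nonneg.2 hx.2)]
    push_cast
    ring
  rw [hbeta, ← Complex.ofReal_add, Complex.Gamma_ofReal, Complex.Gamma_ofReal,
    Complex.Gamma_ofReal] at h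
  exact_mod_cast h

theorem Real.Gamma_two_mul_lt_Gamma_mul_Gamma_add_one {α : ℝ} (hα : 0 < α) (hα1 : α < 1) :
    Gamma (2 * α) < Gamma α * Gamma (α + 1) := by
  set I := ∫ t in (0 : ℝ)..1, t ^ α * (1 - t) ^ α
  set J := ∫ t in (0 : ℝ)..1, t ^ α * (1 - t)
  have hI : Gamma (α + 1) * Gamma (α + 1) = Gamma (α + 1 + (α + 1)) * I := by
    simpa using Gamma_mul_Gamma_eq_integral (a := α + 1) (b := α + 1) (by linarith) (by linarith)
  have hJ : Gamma (α + 1) * Gamma 2 = Gamma (α + 1 + 2) * J := by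
    simpa [show (2 : ℝ) - 1 = 1 by norm_num] using
      Gamma_mul_Gamma_eq_integral (a := α + 1) (b := 2) (by linarith) two_pos
  have hpow : Continuous fun t : ℝ => t ^ α := continuous_rpow_const hα.le
  have hJI : J ≤ I := by
    refine intervalIntegral.integral_mono_on zero_le_one
      ((hpow.mul (continuous_const.sub continuous_id)).intervalIntegrable _ _)
      ((hpow.mul (hpow.comp (continuous_const.sub continuous_id))).intervalIntegrable _ _)
      fun t ht => ?_
    exact mul_le_mul_of_nonneg_left
      (self_le_rpow_of_le_one (by linarith [ht.2]) (by linarith [ht.1]) hα1.le)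
      (rpow_nonneg ht.1 α)
  have hG1 : Gamma (α + 1) = α * Gamma α := Gamma_add_one hα.ne'
  have hG2 : Gamma (α + 1 + (α + 1)) = (2 * α + 1) * (2 * α) * Gamma (2 * α) := by
    rw [show α + 1 + (α + 1) = 2 * α + 1 + 1 by ring, Gamma_add_one (by positivity),
      Gamma_add_one (by positivity)]
    ring
  have hG3 : Gamma (α + 1 + 2) = (α + 2) * (α + 1) * Gamma (α + 1) := by
    rw [show α + 1 + 2 = α + 1 + 1 + 1 by ring, Gamma_add_one (by positivity),
      Gamma_add_one (by positivity)]
    ring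
  have hJ_eq : J = ((α + 1) * (α + 2))⁻¹ := by
    rw [Gamma_two, hG3] at hJ
    rw [← mul_eq_one_iff_eq_inv₀ (by positivity)]
    refine mul_left_cancel₀ (Gamma_pos_of_pos (show 0 < α + 1 by linarith)).ne' ?_
    linear_combination -hJ
  have hG2α := Gamma_pos_of_pos (show 0 < 2 * α by linarith)
  calc Gamma (2 * α) < 2 * (2 * α + 1) * J * Gamma (2 * α) := by
        refine lt_mul_of_one_lt_left hG2α ?_
        rw [hJ_eq, ← div_eq_mul_inv, one_lt_div (by positivity)]
        nlinarith
    _ ≤ 2 * (2 * α + 1) * I * Gamma (2 * α) := by gcongr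
    _ = Gamma α * Gamma (α + 1) := by
        rw [hG2, hG1] at hI
        rw [hG1]
        refine mul_left_cancel₀ hα.ne' ?_
        linear_combination -hI

theorem two_mul_eq_of_forall_nonneg_comp_two_mul_eq_mul {f g : ℝ → ℝ} {f' g' : ℝ}
    (hf : HasDerivAt f f' 0) (hg : HasDerivAt g g' 0)
    (h : ∀ x, 0 ≤ x → f (-2 * x) = f (-x) * g (-x)) :
    2 * f' = f' * g 0 + f 0 * g' := by
  have hneg : HasDerivAt (fun x : ℝ => -x) (-1) 0 := hasDerivAt_neg' 0
  have hlhs : HasDerivAt (fun x => f (-2 * x)) (f' * -2) 0 :=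
    hf.comp_of_eq 0 (by simpa only [mul_one] using (hasDerivAt_id' (0 : ℝ)).const_mul (-2))
      (by simp)
  have hrhs : HasDerivAt (fun x => f (-x) * g (-x)) (f' * -1 * g 0 + f 0 * (g' * -1)) 0 := by
    have := (hf.comp_of_eq 0 hneg (by simp)).mul (hg.comp_of_eq 0 hneg (by simp))
    simp only [Function.comp_apply, neg_zero] at this
    exact this
  -- the two sides agree only on `[0, ∞)`, where derivatives are still unique
  have := (uniqueDiffOn_Ici (0 : ℝ) 0 Set.self_mem_Ici).eq_deriv _
    (hlhs.hasDerivWithinAt.congr_of_mem (fun x hx => (h x hx).symm) Set.self_mem_Ici)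
    hrhs.hasDerivWithinAt
  linear_combination -this

theorem exists_nonneg_rpow_mul_rpow_eq {k α x : ℝ} (hk : 0 < k) (hα : α ≠ 0) (hx : 0 ≤ x) :
    ∃ t, 0 ≤ t ∧ k ^ α * t ^ α = x :=
  ⟨x ^ α⁻¹ / k, by positivity, by
    rw [div_rpow (by positivity) hk.le, rpow_inv_rpow hx hα]
    field_simp⟩

theorem mittagLeffler_eq_mittagLeffler2 (α : ℝ) : mittagLeffler α = mittagLeffler2 α 1 := rfl

theorem mittagLeffler2_eq_ofScalarsSum (α β : ℝ) :
    mittagLeffler2 α β = ofScalarsSum fun n : ℕ => (Gamma (α * n + β))⁻¹ := by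
  ext z
  simp only [mittagLeffler2, ofScalarsSum_eq_tsum, smul_eq_mul, div_eq_inv_mul]

theorem mittagLeffler2_zero (α β : ℝ) : mittagLeffler2 α β 0 = (Gamma β)⁻¹ := by
  simp [mittagLeffler2_eq_ofScalarsSum]

theorem mittagLeffler2_one_one : mittagLeffler2 1 1 = exp := by
  ext z
  rw [mittagLeffler2, exp_eq_exp_ℝ, NormedSpace.exp_eq_tsum_div]
  congr 1 with n
  rw [one_mul, Gamma_nat_eq_factorial]

theorem one_le_radius_ofScalars_inv_Gamma {α β : ℝ} (hα : 0 ≤ α) (hβ : 0 < β) :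
    1 ≤ (ofScalars ℝ fun n : ℕ => (Gamma (α * n + β))⁻¹).radius := by
  obtain ⟨x₀, hx₀, hmin⟩ := exists_isMinOn_Gamma_Ioi
  have hpos : ∀ n : ℕ, 0 < α * n + β := fun n => by positivity
  refine ENNReal.coe_one ▸ le_radius_of_bound _ (Gamma x₀)⁻¹ fun n => ?_
  rw [ofScalars_norm, NNReal.coe_one, one_pow, mul_one, norm_inv,
    norm_of_nonneg (Gamma_pos_of_pos (hpos n)).le]
  exact inv_anti₀ (Gamma_pos_of_pos (zero_lt_one.trans hx₀.1)) (hmin (hpos n))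

theorem hasDerivAt_mittagLeffler2_zero {α β : ℝ} (hα : 0 ≤ α) (hβ : 0 < β) :
    HasDerivAt (mittagLeffler2 α β) (Gamma (α + β))⁻¹ 0 := by
  have hp := (ofScalars ℝ fun n : ℕ => (Gamma (α * n + β))⁻¹).hasFPowerSeriesOnBall
    (zero_lt_one.trans_le (one_le_radius_ofScalars_inv_Gamma hα hβ))
  rw [mittagLeffler2_eq_ofScalarsSum]
  have h := hp.hasFPowerSeriesAt.hasDerivAt
  rw [ofScalars_apply_eq] at h
  simp only [Nat.cast_one, mul_one, pow_one, smul_eq_mul] at h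
  exact h

theorem Gamma_mul_Gamma_add_one_eq_of_mittagLeffler2_identity {α : ℝ} (hα : 0 < α)
    (h : ∀ x, 0 ≤ x →
      mittagLeffler2 α α (-2 * x) = mittagLeffler2 α α (-x) * mittagLeffler α (-x)) :
    Gamma α * Gamma (α + 1) = Gamma (2 * α) := by
  rw [mittagLeffler_eq_mittagLeffler2] at h
  have := two_mul_eq_of_forall_nonneg_comp_two_mul_eq_mul
    (hasDerivAt_mittagLeffler2_zero hα.le hα) (hasDerivAt_mittagLeffler2_zero hα.le one_pos) h
  rw [mittagLeffler2_zero, mittagLeffler2_zero, Gamma_one, inv_one, mul_one, ← two_mul α,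
    ← mul_inv] at this
  exact inv_injective (by linear_combination -this)

theorem mittagLeffler2_identity_iff (α k : ℝ) (hα : 0 < α) (hα1 : α ≤ 1) (hk : 0 < k) :
    (∀ t : ℝ, 0 ≤ t →
      mittagLeffler2 α α (-2 * k ^ α * t ^ α) =
        mittagLeffler2 α α (-(k ^ α) * t ^ α) * mittagLeffler α (-(k ^ α) * t ^ α)) ↔
      α = 1 := by
  constructor
  · intro h
    by_contra hne
    refine (Gamma_two_mul_lt_Gamma_mul_Gamma_add_one hα (hα1.lt_of_ne hne)).ne' ?_
    refine Gamma_mul_Gamma_add_one_eq_of_mittagLeffler2_identity hα fun x hx => ?_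
    obtain ⟨t, ht, rfl⟩ := exists_nonneg_rpow_mul_rpow_eq hk hα.ne' hx
    simpa only [mul_assoc, neg_mul] using h t ht
  · rintro rfl t -
    simp only [rpow_one, mittagLeffler_eq_mittagLeffler2, mittagLeffler2_one_one, ← exp_add]
    ring_nf
end
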